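/- For every Θ = (θ₁,…,θ₅) with all θ_i > 0 and θ₁+⋯+θ₅ < π and all diagonal matrices D₁ = diag(d₁,…,d₅), D₂ = diag(e₁,…,e₅) with strictly positive diagonal entries, the matrix X = D₁ S(Θ) D₂ satisfies the binomial equation X₁₁X₂₂X₃₃X₄₄X₅₅ = X₃₁X₄₂X₅₃X₁₄X₂₅, where X_{ij} denotes the entry of X in row i and column j. -/

import Mathlib

open Matrix Real

/-!
Both sides are products of entries of `X` along a permutation pattern (the identity and
`i ↦ i + 2` on `Fin 5`), so each picks up every diagonal entry of `D₁` and `D₂` exactly once.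
What remains is that both patterns select the same entries `sin θ₁, …, sin θ₅` of `S(Θ)`.
-/

/-- The matrix `S(Θ)` whose columns span the nonnegative zeros of the Hildebrand matrix. -/
noncomputable def Smat (θ : Fin 5 → ℝ) : Matrix (Fin 5) (Fin 5) ℝ :=
  !![sin (θ 4), 0, 0, sin (θ 1), sin (θ 2 + θ 3);
     sin (θ 3 + θ 4), sin (θ 0), 0, 0, sin (θ 2);
     sin (θ 3), sin (θ 4 + θ 0), sin (θ 1), 0, 0;
     0, sin (θ 4), sin (θ 0 + θ 1), sin (θ 2), 0;
     0, 0, sin (θ 0), sin (θ 1 + θ 2), sin (θ 3)]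

theorem prod_diagonal_mul_mul_diagonal_apply_perm {n R : Type*} [Fintype n] [DecidableEq n]
    [CommSemiring R] (σ : Equiv.Perm n) (S : Matrix n n R) (d e : n → R) :
    ∏ i, (diagonal d * S * diagonal e) (σ i) i = (∏ i, d i) * (∏ i, S (σ i) i) * ∏ i, e i := by
  simp only [mul_diagonal, diagonal_mul, Finset.prod_mul_distrib, Equiv.prod_comp σ d]

theorem prod_Smat_diag (θ : Fin 5 → ℝ) : ∏ i, Smat θ i i = ∏ i, sin (θ i) := by
  simp only [Smat, Fin.prod_univ_five, of_apply, cons_val', cons_val_fin_one, cons_val_zero,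
    cons_val_one, cons_val]
  ring

theorem prod_Smat_shift (θ : Fin 5 → ℝ) : ∏ i, Smat θ (i + 2) i = ∏ i, sin (θ i) := by
  simp only [Smat, Fin.prod_univ_five, of_apply, cons_val', cons_val_fin_one, cons_val_zero,
    zero_add, cons_val, cons_val_one, Fin.reduceAdd]
  ring

theorem smat_binomial_general (θ : Fin 5 → ℝ) (d e : Fin 5 → ℝ) :
    (diagonal d * Smat θ * diagonal e) 0 0 * (diagonal d * Smat θ * diagonal e) 1 1 *
      (diagonal d * Smat θ * diagonal e) 2 2 * (diagonal d * Smat θ * diagonal e) 3 3 *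
      (diagonal d * Smat θ * diagonal e) 4 4 =
    (diagonal d * Smat θ * diagonal e) 2 0 * (diagonal d * Smat θ * diagonal e) 3 1 *
      (diagonal d * Smat θ * diagonal e) 4 2 * (diagonal d * Smat θ * diagonal e) 0 3 *
      (diagonal d * Smat θ * diagonal e) 1 4 := by
  have diag := prod_diagonal_mul_mul_diagonal_apply_perm 1 (Smat θ) d e
  have shift := prod_diagonal_mul_mul_diagonal_apply_perm (Equiv.addRight 2) (Smat θ) d e
  simp only [Equiv.Perm.coe_one, id, Equiv.coe_addRight] at diag shift
  rw [prod_Smat_diag] at diag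
  rw [prod_Smat_shift, ← diag] at shift
  simpa [Fin.prod_univ_five] using shift.symm

/-- every matrix `X = D₁ S(Θ) D₂` with positive diagonal matrices `D₁, D₂`
satisfies the binomial equation `X₁₁X₂₂X₃₃X₄₄X₅₅ = X₃₁X₄₂X₅₃X₁₄X₂₅`. -/
theorem smat_binomial (θ : Fin 5 → ℝ) (hθ : ∀ i, 0 < θ i) (hsum : (∑ i, θ i) < π)
    (d e : Fin 5 → ℝ) (hd : ∀ i, 0 < d i) (he : ∀ i, 0 < e i) :
    (diagonal d * Smat θ * diagonal e) 0 0 * (diagonal d * Smat θ * diagonal e) 1 1 *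
      (diagonal d * Smat θ * diagonal e) 2 2 * (diagonal d * Smat θ * diagonal e) 3 3 *
      (diagonal d * Smat θ * diagonal e) 4 4 =
    (diagonal d * Smat θ * diagonal e) 2 0 * (diagonal d * Smat θ * diagonal e) 3 1 *
      (diagonal d * Smat θ * diagonal e) 4 2 * (diagonal d * Smat θ * diagonal e) 0 3 *
      (diagonal d * Smat θ * diagonal e) 1 4 :=
  smat_binomial_general θ d e
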